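/- arXiv:1602.01068 — 4 statements merged into one kernel-verified Lean document; each statement's English description precedes it below -/
import Mathlib

section
/- Let (Z, τ) be a compact Hausdorff topological space and let ∂ be a metric on the set Z such that (i) the topology induced by ∂ refines τ (every τ-open set is ∂-open), and (ii) ∂ is τ-lower semicontinuous, i.e. for every r ≥ 0 the set {(a,b) ∈ Z × Z : ∂(a,b) ≤ r} is closed in the product topology τ × τ. Then the metric space (Z, ∂) is complete. -/
/-- **Completeness of compact topometric spaces.**
Let `(Z, τ)` be a compact Hausdorff topological space and let `∂` be a metric on the set `Z`
such that (i) the topology induced by `∂` refines `τ` (every `τ`-open set is `∂`-open), and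
(ii) `∂` is `τ`-lower semicontinuous, i.e. for every `r ≥ 0` the set
`{(a,b) : ∂ a b ≤ r}` is closed in the product topology. Then the metric `∂` is complete:
every `∂`-Cauchy sequence `∂`-converges. -/
theorem compact_topometric_complete {Z : Type*} [TopologicalSpace Z] [CompactSpace Z] [T2Space Z]
    (d : Z → Z → ℝ)
    (d_eq_zero : ∀ a b, d a b = 0 ↔ a = b)
    (d_symm : ∀ a b, d a b = d b a)
    (d_triangle : ∀ a b c, d a c ≤ d a b + d b c)
    (refines : ∀ s : Set Z, IsOpen s → ∀ a ∈ s, ∃ ε > 0, {b | d a b < ε} ⊆ s)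
    (lsc : ∀ r : ℝ, 0 ≤ r → IsClosed {p : Z × Z | d p.1 p.2 ≤ r}) :
    ∀ u : ℕ → Z, (∀ ε > 0, ∃ N, ∀ m ≥ N, ∀ n ≥ N, d (u m) (u n) < ε) →
      ∃ z : Z, ∀ ε > 0, ∃ N, ∀ n ≥ N, d (u n) z < ε := by
  intro u hu
  -- a τ-cluster point of the sequence
  obtain ⟨z, hz⟩ := exists_clusterPt_of_compactSpace (Filter.map u Filter.atTop)
  refine ⟨z, fun ε hε => ?_⟩
  obtain ⟨N, hN⟩ := hu (ε / 2) (by linarith)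
  refine ⟨N, fun n hn => ?_⟩
  -- the set S is τ-closed and contains the tail of the sequence
  have hclosed : IsClosed {b | d (u n) b ≤ ε / 2} := by
    have : Continuous fun b : Z => (u n, b) := by continuity
    exact (lsc (ε / 2) (by linarith)).preimage this
  have htail : {m | m ≥ N} ⊆ u ⁻¹' {b | d (u n) b ≤ ε / 2} := fun m hm =>
    le_of_lt (hN n hn m hm)
  have hmem : u ⁻¹' {b | d (u n) b ≤ ε / 2} ∈ Filter.atTop :=
    Filter.mem_of_superset (Filter.mem_atTop N) htail
  have hz' : z ∈ closure {b | d (u n) b ≤ ε / 2} := by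
    have : ClusterPt z (Filter.principal {b | d (u n) b ≤ ε / 2}) :=
      hz.mono (Filter.le_principal_iff.2 hmem)
    rwa [mem_closure_iff_clusterPt]
  have : d (u n) z ≤ ε / 2 := by
    have := hclosed.closure_eq ▸ hz'
    exact this
  linarith
end

section
/- Let (X,d) be a bounded metric space with Samuel compactification (S(X), τ, ∂). For any nonempty τ-open subsets U, V of S(X), one has ∂(cl_τ(U), cl_τ(V)) = ∂(U, V) = d(U ∩ X, V ∩ X), where X is identified with its image in S(X) under the evaluation embedding. -/
open scoped BoundedContinuousFunction
noncomputable section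

variable (X : Type*) [MetricSpace X]

/-- The star subalgebra of bounded *uniformly continuous* complex-valued functions
inside the C*-algebra of bounded continuous functions. -/
def UCB : StarSubalgebra ℂ (X →ᵇ ℂ) where
  carrier := {f | UniformContinuous ⇑f}
  mul_mem' := by
    intro a b ha hb
    simp only [Set.mem_setOf_eq] at *
    have hbd : Bornology.IsBounded (Set.range fun x => ((a x : ℂ), (b x : ℂ))) := by
      refine Bornology.IsBounded.subset ((a.isBounded_range).prod (b.isBounded_range)) ?_
      rintro p ⟨x, rfl⟩
      exact ⟨⟨x, rfl⟩, ⟨x, rfl⟩⟩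
    set K := closure (Set.range fun x => ((a x : ℂ), (b x : ℂ))) with hK
    have hKc : IsCompact K := hbd.isCompact_closure
    haveI : CompactSpace K := isCompact_iff_compactSpace.mp hKc
    have hmul : UniformContinuous fun p : K => (p : ℂ × ℂ).1 * (p : ℂ × ℂ).2 :=
      CompactSpace.uniformContinuous_of_continuous
        ((continuous_fst.comp continuous_subtype_val).mul
          (continuous_snd.comp continuous_subtype_val))
    have hF : UniformContinuous fun x : X => (⟨(a x, b x), subset_closure ⟨x, rfl⟩⟩ : K) :=
      (ha.prodMk hb).subtype_mk _
    have : UniformContinuous fun x : X => a x * b x := hmul.comp hF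
    exact this
  one_mem' := by
    exact (uniformContinuous_const : UniformContinuous fun _ : X => (1 : ℂ))
  add_mem' := by
    intro a b ha hb
    simp only [Set.mem_setOf_eq] at *
    exact ha.add hb
  zero_mem' := by
    exact (uniformContinuous_const : UniformContinuous fun _ : X => (0 : ℂ))
  algebraMap_mem' := by
    intro c
    have : ⇑(algebraMap ℂ (X →ᵇ ℂ) c) = fun _ : X => c := by
      ext x; simp [Algebra.algebraMap_eq_smul_one]
    simp only [Set.mem_setOf_eq, this]
    exact uniformContinuous_const
  star_mem' := by
    intro a ha
    simp only [Set.mem_setOf_eq] at *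
    have : UniformContinuous fun x : X => (starRingEnd ℂ) (a x) :=
      (Complex.isometry_conj.uniformContinuous).comp ha
    exact this

/-- The Samuel compactification of a metric space `X`: the character space (Gelfand spectrum)
of the algebra of bounded uniformly continuous functions, with the weak* topology. -/
def Samuel : Type _ := WeakDual.characterSpace ℂ (UCB X)

instance : TopologicalSpace (Samuel X) := by unfold Samuel; infer_instance

instance : FunLike (Samuel X) (UCB X) ℂ := by unfold Samuel; infer_instance

/-- Evaluation at a point of `X`, as a continuous linear functional on `UCB X`. -/
def samuelEvalCLM (x : X) : WeakDual ℂ (UCB X) :=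
  LinearMap.mkContinuous
    { toFun := fun f => (f : X →ᵇ ℂ) x
      map_add' := fun f g => by simp
      map_smul' := fun c f => by simp } 1
    (fun f => by rw [one_mul]; exact BoundedContinuousFunction.norm_coe_le_norm (f : X →ᵇ ℂ) x)

lemma samuelEvalCLM_apply (x : X) (f : UCB X) : samuelEvalCLM X x f = (f : X →ᵇ ℂ) x := rfl

/-- Evaluation at a point of `X`, as a character of `UCB X`:
this is the canonical embedding of `X` into its Samuel compactification. -/
def samuelEmbed (x : X) : Samuel X :=
  ⟨samuelEvalCLM X x, by
    refine ⟨fun h => ?_, fun f g => ?_⟩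
    · have h1 : samuelEvalCLM X x 1 = 0 := by rw [h]; rfl
      have h2 : samuelEvalCLM X x 1 = 1 := rfl
      rw [h1] at h2
      exact zero_ne_one h2
    · simp only [samuelEvalCLM_apply]
      simp⟩

/-- The bounded `1`-Lipschitz real-valued functions on `X`. -/
def Lip1 : Type _ := {f : X →ᵇ ℝ // LipschitzWith 1 ⇑f}

/-- A bounded `1`-Lipschitz real function, regarded as an element of `UCB X`. -/
def toUCB (f : Lip1 X) : UCB X :=
  ⟨BoundedContinuousFunction.comp Complex.ofReal
      (Complex.isometry_ofReal.lipschitz) f.1,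
   by
     have : UniformContinuous fun x : X => (f.1 x : ℂ) :=
       Complex.isometry_ofReal.uniformContinuous.comp f.2.uniformContinuous
     exact this⟩

/-- The topometric distance `∂` on the Samuel compactification:
`∂(a,b) = sup {|a(f) - b(f)| : f : X → ℝ bounded and 1-Lipschitz}`. -/
def samuelDist (a b : Samuel X) : ℝ :=
  ⨆ f : Lip1 X, ‖a (toUCB X f) - b (toUCB X f)‖

/-- The `∂`-gap between two subsets of the Samuel compactification. -/
def samuelSetDist (A B : Set (Samuel X)) : ℝ :=
  sInf {r | ∃ a ∈ A, ∃ b ∈ B, r = samuelDist X a b}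

/-- The `d`-gap between two subsets of the metric space `X`. -/
def metricSetDist (A B : Set X) : ℝ :=
  sInf {r | ∃ a ∈ A, ∃ b ∈ B, r = dist a b}

/-!
`X` is dense in `S(X)`: a point outside the closure of `X` would give, by Urysohn and Gelfand
duality, a nonzero element of `UCB X` vanishing on `X`. Hence every open `U` lies in the closure
of `U ∩ X`. Each bounded `1`-Lipschitz `f` gives a weak*-continuous map `a ↦ a(f)` on `S(X)`;
testing with `f = d(·, A)`, which vanishes on `A` and is at least `d(A, B)` on `B`, shows
`d(A, B) ≤ ∂(a, b)` for `a ∈ cl A` and `b ∈ cl B`. Together with `∂ ≤ d` on `X` this closes the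
chain `∂(cl U, cl V) ≤ ∂(U, V) ≤ d(U ∩ X, V ∩ X) ≤ ∂(cl U, cl V)`.
-/

instance : IsClosed (UCB X : Set (X →ᵇ ℂ)) :=
  isClosed_iff_frequently.mpr fun _ hf ↦
    (BoundedContinuousFunction.tendsto_iff_tendstoUniformly.mp Filter.tendsto_id).uniformContinuous
      hf

instance : CompactSpace (Samuel X) := by unfold Samuel; infer_instance

instance : T2Space (Samuel X) := by unfold Samuel; infer_instance

variable {X}

lemma samuelEmbed_apply (x : X) (f : UCB X) : samuelEmbed X x f = (f : X →ᵇ ℂ) x := rfl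

lemma continuous_samuel_apply (f : UCB X) : Continuous fun a : Samuel X ↦ a f :=
  show Continuous fun a : WeakDual.characterSpace ℂ (UCB X) ↦ (a : WeakDual ℂ (UCB X)) f from
    (WeakDual.eval_continuous f).comp continuous_subtype_val

variable (X) in
lemma denseRange_samuelEmbed : DenseRange (samuelEmbed X) := by
  by_contra hdense
  obtain ⟨p, hp⟩ : ∃ p, p ∉ closure (Set.range (samuelEmbed X)) := by
    simpa [DenseRange, dense_iff_closure_eq, Set.eq_univ_iff_forall] using hdense
  obtain ⟨g, hg0, hg1, -⟩ := exists_continuous_zero_one_of_isClosed isClosed_closure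
    isClosed_singleton (Set.disjoint_singleton_right.mpr hp)
  let gC : C(Samuel X, ℂ) := (ContinuousMap.mk Complex.ofReal Complex.continuous_ofReal).comp g
  obtain ⟨f, hf⟩ := (gelfandTransform_bijective (UCB X)).2 gC
  have hf0 : f = 0 := by
    ext x
    have hx : g (samuelEmbed X x) = 0 := hg0 (subset_closure ⟨x, rfl⟩)
    calc (f : X →ᵇ ℂ) x = gC (samuelEmbed X x) := by rw [← hf]; rfl
      _ = 0 := by simp [gC, hx]
  have hgp : gC p = 1 := by simp [gC, hg1 rfl]
  have : gC p = 0 := by rw [← hf, hf0, map_zero]; rfl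
  exact zero_ne_one (this.symm.trans hgp)

lemma apply_mem_of_mem_closure_image {A : Set X} {f : UCB X} {K : Set ℂ} (hK : IsClosed K)
    (hfK : ∀ x ∈ A, (f : X →ᵇ ℂ) x ∈ K) {a : Samuel X}
    (ha : a ∈ closure (samuelEmbed X '' A)) : a f ∈ K :=
  hK.closure_subset <| map_mem_closure (f := fun c : Samuel X ↦ c f) (continuous_samuel_apply f)
    ha fun _ ⟨x, hx, hxa⟩ ↦ hxa ▸ hfK x hx

lemma apply_mem_of_forall_mem {f : UCB X} {K : Set ℂ} (hK : IsClosed K)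
    (hfK : ∀ x, (f : X →ᵇ ℂ) x ∈ K) (a : Samuel X) : a f ∈ K :=
  apply_mem_of_mem_closure_image hK (fun x _ ↦ hfK x) <| by
    rw [Set.image_univ, (denseRange_samuelEmbed X).closure_range]
    trivial

lemma LipschitzWith.dist_le_diam_univ {Y : Type*} [PseudoMetricSpace Y] {f : X → Y}
    (hf : LipschitzWith 1 f) (hbdd : Bornology.IsBounded (Set.univ : Set X)) (x y : X) :
    dist (f x) (f y) ≤ Metric.diam (Set.univ : Set X) :=
  calc dist (f x) (f y) ≤ dist x y := by simpa using hf.dist_le_mul x y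
    _ ≤ _ := Metric.dist_le_diam_of_mem hbdd trivial trivial

namespace Lip1

def ofLipschitz (hbdd : Bornology.IsBounded (Set.univ : Set X)) (f : X → ℝ)
    (hf : LipschitzWith 1 f) : Lip1 X :=
  ⟨.mkOfBound ⟨f, hf.continuous⟩ _ (hf.dist_le_diam_univ hbdd), hf⟩

end Lip1

@[simp]
lemma toUCB_apply (f : Lip1 X) (x : X) : (toUCB X f : X →ᵇ ℂ) x = (f.1 x : ℂ) := rfl

lemma samuelDist_nonneg (a b : Samuel X) : 0 ≤ samuelDist X a b :=
  Real.iSup_nonneg fun _ ↦ norm_nonneg _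

lemma samuelDist_samuelEmbed_le (x y : X) :
    samuelDist X (samuelEmbed X x) (samuelEmbed X y) ≤ dist x y := by
  refine Real.iSup_le (fun f ↦ ?_) dist_nonneg
  rw [samuelEmbed_apply, samuelEmbed_apply, toUCB_apply, toUCB_apply, ← Complex.ofReal_sub,
    Complex.norm_real, Real.norm_eq_abs, ← Real.dist_eq]
  simpa using f.2.dist_le_mul x y

-- `samuelDist` is a real `⨆`, which takes the junk value `0` unless this family is bounded.
lemma bddAbove_range_norm_sub (hbdd : Bornology.IsBounded (Set.univ : Set X)) (a b : Samuel X) :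
    BddAbove (Set.range fun f : Lip1 X ↦ ‖a (toUCB X f) - b (toUCB X f)‖) := by
  obtain ⟨x₀⟩ := (denseRange_samuelEmbed X).nonempty_iff.mpr ⟨a⟩
  set D := Metric.diam (Set.univ : Set X)
  refine ⟨2 * D, ?_⟩
  rintro _ ⟨f, rfl⟩
  dsimp only
  have hball : ∀ c : Samuel X, c (toUCB X f) ∈ Metric.closedBall (f.1 x₀ : ℂ) D := by
    refine apply_mem_of_forall_mem Metric.isClosed_closedBall fun x ↦ ?_
    rw [toUCB_apply, Metric.mem_closedBall, Complex.dist_eq, ← Complex.ofReal_sub,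
      Complex.norm_real, Real.norm_eq_abs, ← Real.dist_eq]
    exact f.2.dist_le_diam_univ hbdd x x₀
  rw [← dist_eq_norm]
  linarith [dist_triangle_right (a (toUCB X f)) (b (toUCB X f)) (f.1 x₀ : ℂ),
    Metric.mem_closedBall.mp (hball a), Metric.mem_closedBall.mp (hball b)]

lemma norm_sub_le_samuelDist (hbdd : Bornology.IsBounded (Set.univ : Set X)) (a b : Samuel X)
    (f : Lip1 X) : ‖a (toUCB X f) - b (toUCB X f)‖ ≤ samuelDist X a b :=
  le_ciSup (bddAbove_range_norm_sub hbdd a b) f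

lemma samuelSetDist_le {A B : Set (Samuel X)} {a b : Samuel X} (ha : a ∈ A) (hb : b ∈ B) :
    samuelSetDist X A B ≤ samuelDist X a b := by
  refine csInf_le ⟨0, ?_⟩ ⟨a, ha, b, hb, rfl⟩
  rintro _ ⟨a, -, b, -, rfl⟩
  exact samuelDist_nonneg a b

lemma le_samuelSetDist {A B : Set (Samuel X)} (hA : A.Nonempty) (hB : B.Nonempty) {r : ℝ}
    (h : ∀ a ∈ A, ∀ b ∈ B, r ≤ samuelDist X a b) : r ≤ samuelSetDist X A B :=
  le_csInf (let ⟨a, ha⟩ := hA; let ⟨b, hb⟩ := hB; ⟨_, a, ha, b, hb, rfl⟩) <| by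
    rintro _ ⟨a, ha, b, hb, rfl⟩
    exact h a ha b hb

lemma metricSetDist_le {A B : Set X} {x y : X} (hx : x ∈ A) (hy : y ∈ B) :
    metricSetDist X A B ≤ dist x y := by
  refine csInf_le ⟨0, ?_⟩ ⟨x, hx, y, hy, rfl⟩
  rintro _ ⟨x, -, y, -, rfl⟩
  exact dist_nonneg

lemma le_metricSetDist {A B : Set X} (hA : A.Nonempty) (hB : B.Nonempty) {r : ℝ}
    (h : ∀ x ∈ A, ∀ y ∈ B, r ≤ dist x y) : r ≤ metricSetDist X A B :=
  le_csInf (let ⟨x, hx⟩ := hA; let ⟨y, hy⟩ := hB; ⟨_, x, hx, y, hy, rfl⟩) <| by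
    rintro _ ⟨x, hx, y, hy, rfl⟩
    exact h x hx y hy

lemma metricSetDist_le_infDist {A B : Set X} (hA : A.Nonempty) {y : X} (hy : y ∈ B) :
    metricSetDist X A B ≤ Metric.infDist y A := by
  have : Nonempty A := hA.to_subtype
  rw [Metric.infDist_eq_iInf]
  exact le_ciInf fun x ↦ dist_comm x.1 y ▸ metricSetDist_le x.2 hy

lemma metricSetDist_le_samuelDist (hbdd : Bornology.IsBounded (Set.univ : Set X))
    {A B : Set X} (hA : A.Nonempty) {a b : Samuel X} (ha : a ∈ closure (samuelEmbed X '' A))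
    (hb : b ∈ closure (samuelEmbed X '' B)) :
    metricSetDist X A B ≤ samuelDist X a b := by
  set F := toUCB X (Lip1.ofLipschitz hbdd (Metric.infDist · A) (Metric.lipschitz_infDist_pt A))
  have haF : a F = 0 :=
    apply_mem_of_mem_closure_image (f := F) (K := {0}) isClosed_singleton
      (fun x hx ↦ show (Metric.infDist x A : ℂ) = 0 by simp [Metric.infDist_zero_of_mem hx]) ha
  have hbF : metricSetDist X A B ≤ (b F).re :=
    apply_mem_of_mem_closure_image (f := F) (K := {z | metricSetDist X A B ≤ z.re})
      (isClosed_le continuous_const Complex.continuous_re)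
      (fun y hy ↦ show metricSetDist X A B ≤ (Metric.infDist y A : ℂ).re by
        simpa using metricSetDist_le_infDist hA hy) hb
  calc metricSetDist X A B ≤ (b F).re := hbF
    _ ≤ ‖a F - b F‖ := by rw [haF, zero_sub, norm_neg]; exact Complex.re_le_norm _
    _ ≤ samuelDist X a b := norm_sub_le_samuelDist hbdd a b _

variable (X)

/-- **Lemma on gaps between open sets in the Samuel compactification.**
If `(X,d)` is a bounded metric space and `U`, `V` are nonempty open subsets of the Samuel
compactification `S(X)`, then
`∂(cl U, cl V) = ∂(U, V) = d(U ∩ X, V ∩ X)`,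
where `X` is identified with its image in `S(X)` under the evaluation embedding. -/
theorem samuel_setDist_closure_eq (hbdd : Bornology.IsBounded (Set.univ : Set X))
    (U V : Set (Samuel X)) (hU : IsOpen U) (hV : IsOpen V)
    (hUne : U.Nonempty) (hVne : V.Nonempty) :
    samuelSetDist X (closure U) (closure V) = samuelSetDist X U V ∧
      samuelSetDist X U V =
        metricSetDist X (samuelEmbed X ⁻¹' U) (samuelEmbed X ⁻¹' V) := by
  have hdense := denseRange_samuelEmbed X
  have hclosure {W : Set (Samuel X)} (hW : IsOpen W) :
      closure W ⊆ closure (samuelEmbed X '' (samuelEmbed X ⁻¹' W)) :=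
    closure_minimal (hdense.subset_closure_image_preimage_of_isOpen hW) isClosed_closure
  have hpreimage {W : Set (Samuel X)} (hW : IsOpen W) (hWne : W.Nonempty) :
      (samuelEmbed X ⁻¹' W).Nonempty := by
    obtain ⟨_, hx, x, rfl⟩ := hdense.inter_open_nonempty W hW hWne
    exact ⟨x, hx⟩
  set A := samuelEmbed X ⁻¹' U
  set B := samuelEmbed X ⁻¹' V
  have closure_le : samuelSetDist X (closure U) (closure V) ≤ samuelSetDist X U V :=
    le_samuelSetDist hUne hVne fun a ha b hb ↦
      samuelSetDist_le (subset_closure ha) (subset_closure hb)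
  have le_metric : samuelSetDist X U V ≤ metricSetDist X A B :=
    le_metricSetDist (hpreimage hU hUne) (hpreimage hV hVne) fun x hx y hy ↦
      (samuelSetDist_le hx hy).trans (samuelDist_samuelEmbed_le x y)
  have metric_le : metricSetDist X A B ≤ samuelSetDist X (closure U) (closure V) :=
    le_samuelSetDist hUne.closure hVne.closure fun a ha b hb ↦
      metricSetDist_le_samuelDist hbdd (hpreimage hU hUne) (hclosure hU ha) (hclosure hV hb)
  exact ⟨le_antisymm closure_le (le_metric.trans metric_le),
    le_antisymm le_metric (metric_le.trans closure_le)⟩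
end
end

section
/- Let (X,d) be a bounded metric space with Samuel compactification (S(X), τ, ∂). Let K ⊆ S(X) be a subset such that K with the relative τ-topology is a metrizable topological space. Then the topology induced by ∂ and the topology τ coincide on K; in particular, if K is τ-closed, then (K, ∂) is a compact metric space. -/
open scoped BoundedContinuousFunction
noncomputable section

variable (X : Type*) [MetricSpace X]

/-!
The heart of the matter is that a `τ`-convergent sequence `c k → a` is `∂`-convergent. Every
point of `S(X)` is a limit of points of `X` (Gelfand duality), so it "lives" on the sets of a filter
on `X`. If `∂(c k, a) > ε` for all `k`, then `1`-Lipschitz witnesses give sets carrying `c k` that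
are `ε/3`-far from sets carrying `a`; as `c m → a`, later points concentrate near the sets of
earlier ones, and a diagonal extraction yields a subsequence carried by uniformly separated sets.
The truncated distance to the union of every other one of these sets is uniformly continuous and
takes two distinct values along the subsequence, which contradicts convergence.

Conversely `∂` is finer than `τ` when `X` is bounded: a `τ`-cluster point of a `∂`-convergent
sequence agrees with its `∂`-limit on all `1`-Lipschitz functions, and these separate points.
On a metrizable `K` the topology is sequential, so the two facts identify the topologies, and a
closed `K` is compact, hence sequentially compact.
-/

open Filter Topology Metric

theorem exists_strictMono_forall_lt_of_eventually {R : ℕ → ℕ → Prop}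
    (h : ∀ i, ∀ᶠ j in atTop, R i j) :
    ∃ φ : ℕ → ℕ, StrictMono φ ∧ ∀ i j, i < j → R (φ i) (φ j) := by
  have : ∀ N, ∃ k, N < k ∧ ∀ m ≤ N, R m k := fun N =>
    ((eventually_gt_atTop N).and ((Set.finite_Iic N).eventually_all.2 fun m _ => h m)).exists
  choose u hu hR using this
  have hsucc : ∀ n, u^[n + 1] 0 = u (u^[n] 0) := fun n => Function.iterate_succ_apply' u n 0
  have hmono : StrictMono fun n => u^[n] 0 := strictMono_nat_of_lt_succ fun n => by
    rw [hsucc]; exact hu _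
  refine ⟨fun n => u^[n] 0, hmono, fun i j hij => ?_⟩
  obtain ⟨j, rfl⟩ := Nat.exists_eq_add_of_lt hij
  show R (u^[i] 0) (u^[i + j + 1] 0)
  rw [hsucc]
  exact hR _ _ (hmono.monotone (by omega))

namespace Samuel

variable {X : Type*} [MetricSpace X]

instance isClosed_UCB : IsClosed (UCB X : Set (X →ᵇ ℂ)) := by
  refine isClosed_of_closure_subset fun f hf => ?_
  obtain ⟨g, hg, hgf⟩ := mem_closure_iff_seq_limit.1 hf
  exact (BoundedContinuousFunction.tendsto_iff_tendstoUniformly.1 hgf).uniformContinuous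
    (Frequently.of_forall hg)

instance : CompactSpace (Samuel X) := by unfold Samuel; infer_instance

instance : T2Space (Samuel X) := by unfold Samuel; infer_instance

lemma toUCB_apply (f : Lip1 X) (x : X) : (toUCB X f : X →ᵇ ℂ) x = f.1 x := rfl

lemma continuous_eval (g : UCB X) : Continuous fun a : Samuel X => a g :=
  (WeakDual.eval_continuous g).comp continuous_subtype_val

/-- By Gelfand duality, a point outside the closure of `X` would be detected by a nonzero
element of `UCB X` vanishing on `X`. -/
theorem denseRange_samuelEmbed : DenseRange (samuelEmbed X) := by
  by_contra h
  obtain ⟨a, ha⟩ : ∃ a, a ∉ closure (Set.range (samuelEmbed X)) := by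
    simpa [DenseRange, Dense] using h
  obtain ⟨f, hfX, hfa, -⟩ := exists_continuous_zero_one_of_isClosed isClosed_closure
    isClosed_singleton (Set.disjoint_singleton_right.2 ha)
  let F : C(Samuel X, ℂ) := (ContinuousMap.mk Complex.ofReal Complex.continuous_ofReal).comp f
  have hF : (gelfandStarTransform (UCB X)).symm F = 0 := by
    ext x
    have h := congr($((gelfandStarTransform (UCB X)).apply_symm_apply F) (samuelEmbed X x))
    rw [show F (samuelEmbed X x) = 0 by simp [F, hfX (subset_closure (Set.mem_range_self x))]] at h
    exact h
  have h := congr($((gelfandStarTransform (UCB X)).apply_symm_apply F) a)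
  simp [hF, F, hfa rfl] at h
  exact zero_ne_one h

def nhdsTrace (a : Samuel X) : Filter X := comap (samuelEmbed X) (𝓝 a)

instance (a : Samuel X) : (nhdsTrace a).NeBot :=
  comap_neBot fun _ ht => by
    obtain ⟨_, hyt, x, rfl⟩ := mem_closure_iff_nhds.1 (denseRange_samuelEmbed a) _ ht
    exact ⟨x, hyt⟩

lemma tendsto_nhdsTrace (a : Samuel X) (g : UCB X) :
    Tendsto (fun x => (g : X →ᵇ ℂ) x) (nhdsTrace a) (𝓝 (a g)) :=
  ((continuous_eval g).tendsto a).comp tendsto_comap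

lemma preimage_mem_nhdsTrace {a : Samuel X} {O : Set (Samuel X)} (hO : O ∈ 𝓝 a) :
    samuelEmbed X ⁻¹' O ∈ nhdsTrace a :=
  preimage_mem_comap hO

lemma apply_eq_of_eventually_eq {a : Samuel X} {g : UCB X} {z : ℂ}
    (h : ∀ᶠ x in nhdsTrace a, (g : X →ᵇ ℂ) x = z) : a g = z :=
  tendsto_nhds_unique (tendsto_nhdsTrace a g) (tendsto_const_nhds.congr' (h.mono fun _ => Eq.symm))

lemma norm_apply_sub_apply_le {g : UCB X} {C : ℝ}
    (hg : ∀ x y, ‖(g : X →ᵇ ℂ) x - (g : X →ᵇ ℂ) y‖ ≤ C) (a b : Samuel X) : ‖a g - b g‖ ≤ C := by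
  have h : Tendsto (fun p : X × X => (g : X →ᵇ ℂ) p.1 - (g : X →ᵇ ℂ) p.2)
      (nhdsTrace a ×ˢ nhdsTrace b) (𝓝 (a g - b g)) :=
    ((tendsto_nhdsTrace a g).comp tendsto_fst).sub ((tendsto_nhdsTrace b g).comp tendsto_snd)
  exact le_of_tendsto h.norm (Eventually.of_forall fun p => hg p.1 p.2)

lemma exists_separated_mem_nhdsTrace {a b : Samuel X} {g : UCB X} {δ η : ℝ} (hδ : 0 < δ)
    (hg : ∀ x y, dist x y < η → ‖(g : X →ᵇ ℂ) x - (g : X →ᵇ ℂ) y‖ ≤ δ)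
    (hab : 3 * δ ≤ ‖a g - b g‖) :
    ∃ s ∈ nhdsTrace a, ∃ t ∈ nhdsTrace b, ∀ x ∈ s, ∀ y ∈ t, η ≤ dist x y := by
  refine ⟨_, (tendsto_nhdsTrace a g).eventually (eventually_norm_sub_lt _ hδ),
    _, (tendsto_nhdsTrace b g).eventually (eventually_norm_sub_lt _ hδ), fun x hx y hy => ?_⟩
  by_contra! hxy
  have hx : ‖a g - (g : X →ᵇ ℂ) x‖ < δ := by rw [norm_sub_rev]; exact hx
  have hy : ‖(g : X →ᵇ ℂ) y - b g‖ < δ := hy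
  have := norm_sub_le_norm_sub_add_norm_sub (a g) ((g : X →ᵇ ℂ) x) (b g)
  have := norm_sub_le_norm_sub_add_norm_sub ((g : X →ᵇ ℂ) x) ((g : X →ᵇ ℂ) y) (b g)
  have := hg x y hxy
  linarith

instance : Nonempty (Lip1 X) := ⟨⟨0, fun _ _ => by simp⟩⟩

lemma norm_toUCB_sub_le (f : Lip1 X) (x y : X) :
    ‖(toUCB X f : X →ᵇ ℂ) x - (toUCB X f : X →ᵇ ℂ) y‖ ≤ dist x y := by
  rw [toUCB_apply, toUCB_apply, ← Complex.ofReal_sub, Complex.norm_real, ← dist_eq_norm]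
  simpa using f.2.dist_le_mul x y

lemma samuelDist_nonneg (a b : Samuel X) : 0 ≤ samuelDist X a b :=
  Real.iSup_nonneg fun _ => norm_nonneg _

lemma samuelDist_comm (a b : Samuel X) : samuelDist X a b = samuelDist X b a :=
  iSup_congr fun _ => norm_sub_rev _ _

lemma norm_apply_sub_apply_le_samuelDist (hX : Bornology.IsBounded (Set.univ : Set X))
    (a b : Samuel X) (f : Lip1 X) : ‖a (toUCB X f) - b (toUCB X f)‖ ≤ samuelDist X a b := by
  obtain ⟨C, hC⟩ := isBounded_iff.1 hX
  refine le_ciSup (f := fun f : Lip1 X => ‖a (toUCB X f) - b (toUCB X f)‖) ⟨C, ?_⟩ f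
  rintro - ⟨f, rfl⟩
  exact norm_apply_sub_apply_le
    (fun x y => (norm_toUCB_sub_le f x y).trans (hC (Set.mem_univ x) (Set.mem_univ y))) a b

def capInfDist {r : ℝ} (hr : 0 ≤ r) (s : Set X) : Lip1 X :=
  ⟨BoundedContinuousFunction.mkOfBound
      ⟨fun x => min r (infDist x s), continuous_const.min (continuous_infDist_pt s)⟩ r
      fun x y => by
        simpa using Real.dist_le_of_mem_Icc (⟨le_min hr infDist_nonneg, min_le_left _ _⟩ :
          min r (infDist x s) ∈ Set.Icc 0 r) ⟨le_min hr infDist_nonneg, min_le_left _ _⟩,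
    by simpa using LipschitzWith.const (β := ℝ) r |>.min (lipschitz_infDist_pt s)⟩

lemma capInfDist_apply {r : ℝ} (hr : 0 ≤ r) (s : Set X) (x : X) :
    (capInfDist hr s).1 x = min r (infDist x s) := rfl

lemma apply_capInfDist_eq_zero {r : ℝ} (hr : 0 ≤ r) {a : Samuel X} {s : Set X}
    (hs : s ∈ nhdsTrace a) : a (toUCB X (capInfDist hr s)) = 0 := by
  refine apply_eq_of_eventually_eq (Eventually.mono hs fun x hx => ?_)
  rw [toUCB_apply, capInfDist_apply, infDist_zero_of_mem hx, min_eq_right hr, Complex.ofReal_zero]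

lemma apply_capInfDist_eq {r : ℝ} (hr : 0 ≤ r) {a : Samuel X} {s t : Set X} (hs : s.Nonempty)
    (ht : t ∈ nhdsTrace a) (hst : ∀ x ∈ t, ∀ y ∈ s, r ≤ dist x y) :
    a (toUCB X (capInfDist hr s)) = r := by
  refine apply_eq_of_eventually_eq (Eventually.mono ht fun x hx => ?_)
  rw [toUCB_apply, capInfDist_apply, min_eq_left ((le_infDist hs).2 (hst x hx))]

lemma eq_of_forall_apply_toUCB_eq {a b : Samuel X}
    (h : ∀ f : Lip1 X, a (toUCB X f) = b (toUCB X f)) : a = b := by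
  refine DFunLike.ext _ _ fun g => by_contra fun hne => ?_
  have hpos : 0 < ‖a g - b g‖ := norm_pos_iff.2 (sub_ne_zero.2 hne)
  obtain ⟨η, hη, hg⟩ := Metric.uniformContinuous_iff.1 g.2 (‖a g - b g‖ / 4) (by positivity)
  obtain ⟨s, hs, t, ht, hst⟩ := exists_separated_mem_nhdsTrace (a := a) (b := b) (g := g)
    (η := η) (by positivity : 0 < ‖a g - b g‖ / 4)
    (fun x y hxy => by rw [← dist_eq_norm]; exact (hg hxy).le) (by linarith)
  have h0 := apply_capInfDist_eq_zero hη.le hs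
  have hη' := apply_capInfDist_eq hη.le (nonempty_of_mem hs) ht
    fun y hy x hx => (hst x hx y hy).trans_eq (dist_comm x y)
  rw [h, hη'] at h0
  exact hη.ne' (Complex.ofReal_eq_zero.1 h0)

lemma eventually_thickening_mem_nhdsTrace {a : Samuel X} {s : Set X} (hs : s ∈ nhdsTrace a)
    {r : ℝ} (hr : 0 < r) : ∀ᶠ b in 𝓝 a, thickening r s ∈ nhdsTrace b := by
  let O := {b : Samuel X | ‖b (toUCB X (capInfDist hr.le s))‖ < r}
  have hO : IsOpen O := isOpen_lt (continuous_eval _).norm continuous_const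
  have haO : a ∈ O := by simpa [O, apply_capInfDist_eq_zero hr.le hs] using hr
  filter_upwards [hO.mem_nhds haO] with b hb
  refine mem_of_superset (preimage_mem_nhdsTrace (hO.mem_nhds hb)) fun x hx => ?_
  have hx : ‖((min r (infDist x s) : ℝ) : ℂ)‖ < r := hx
  rw [Complex.norm_real, Real.norm_eq_abs] at hx
  rw [mem_thickening_iff_infDist_lt (nonempty_of_mem hs)]
  exact (min_lt_iff.1 (lt_of_abs_lt hx)).resolve_left (lt_irrefl r)

/-- The truncated distance to the union of the even-indexed sets takes the value `0` along even
indices and `ρ` along odd ones. -/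
lemma not_tendsto_of_separated {d : ℕ → Samuel X} {a : Samuel X} {D : ℕ → Set X} {ρ : ℝ}
    (hρ : 0 < ρ) (hD : ∀ j, D j ∈ nhdsTrace (d j))
    (hsep : ∀ i j, i < j → ∀ x ∈ D i, ∀ y ∈ D j, ρ ≤ dist x y) :
    ¬ Tendsto d atTop (𝓝 a) := by
  intro hlim
  let E := ⋃ i, D (2 * i)
  let G := toUCB X (capInfDist hρ.le E)
  have hE : E.Nonempty := (nonempty_of_mem (hD 0)).mono (Set.subset_iUnion_of_subset 0 le_rfl)
  have heven : ∀ i, d (2 * i) G = 0 := fun i => apply_capInfDist_eq_zero hρ.le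
    (mem_of_superset (hD (2 * i)) (Set.subset_iUnion_of_subset i le_rfl))
  have hodd : ∀ i, d (2 * i + 1) G = ρ := fun i =>
    apply_capInfDist_eq hρ.le hE (hD (2 * i + 1)) fun x hx y hy => by
      obtain ⟨j, hy⟩ := Set.mem_iUnion.1 hy
      rcases lt_or_gt_of_ne (show 2 * i + 1 ≠ 2 * j by omega) with h | h
      · exact hsep _ _ h x hx y hy
      · exact (hsep _ _ h y hy x hx).trans_eq (dist_comm y x)
  have hG : Tendsto (fun j => d j G) atTop (𝓝 (a G)) := ((continuous_eval G).tendsto a).comp hlim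
  have h0 := tendsto_nhds_unique (hG.comp (strictMono_nat_of_lt_succ fun i => by omega :
    StrictMono fun i => 2 * i).tendsto_atTop) (tendsto_const_nhds.congr fun i => (heven i).symm)
  have hρ' := tendsto_nhds_unique (hG.comp (strictMono_nat_of_lt_succ fun i => by omega :
    StrictMono fun i => 2 * i + 1).tendsto_atTop) (tendsto_const_nhds.congr fun i => (hodd i).symm)
  rw [h0, eq_comm, Complex.ofReal_eq_zero] at hρ'
  exact hρ.ne' hρ'

lemma not_tendsto_of_lt_samuelDist {c : ℕ → Samuel X} {a : Samuel X} {ε : ℝ} (hε : 0 < ε)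
    (hc : ∀ k, ε < samuelDist X (c k) a) : ¬ Tendsto c atTop (𝓝 a) := by
  intro hlim
  choose f hf using fun k => exists_lt_of_lt_ciSup (hc k)
  choose s hs t ht hst using fun k => exists_separated_mem_nhdsTrace (a := c k) (b := a)
    (δ := ε / 3) (η := ε / 3) (by positivity)
    (fun x y hxy => (norm_toUCB_sub_le (f k) x y).trans hxy.le) (by linarith [hf k])
  obtain ⟨φ, hφ, hφt⟩ := exists_strictMono_forall_lt_of_eventually fun i =>
    hlim.eventually (eventually_thickening_mem_nhdsTrace (ht i) (by positivity : 0 < ε / 6))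
  -- Along `φ`, the `j`-th point concentrates near every earlier `t (φ i)`, hence far from
  -- `s (φ i)`.
  let D j := s (φ j) ∩ ⋂ i ∈ Finset.range j, thickening (ε / 6) (t (φ i))
  refine not_tendsto_of_separated (D := D) (ρ := ε / 6) (by positivity) (fun j => ?_)
    (fun i j hij x hx y hy => ?_) (hlim.comp hφ.tendsto_atTop)
  · exact inter_mem (hs _) ((biInter_finset_mem _).2 fun i hi => hφt i j (Finset.mem_range.1 hi))
  · obtain ⟨z, hz, hyz⟩ :=
      mem_thickening_iff.1 (Set.mem_iInter₂.1 hy.2 i (Finset.mem_range.2 hij))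
    linarith [hst _ x hx.1 z hz, dist_triangle x y z]

theorem tendsto_samuelDist_of_tendsto {b : ℕ → Samuel X} {a : Samuel X}
    (h : Tendsto b atTop (𝓝 a)) : Tendsto (fun m => samuelDist X (b m) a) atTop (𝓝 0) := by
  refine tendsto_order.2 ⟨fun ε hε => Eventually.of_forall fun m =>
    hε.trans_le (samuelDist_nonneg _ _), fun ε hε => ?_⟩
  by_contra hfreq
  obtain ⟨ψ, hψ, hψε⟩ := extraction_of_frequently_atTop (not_eventually.1 hfreq)
  exact not_tendsto_of_lt_samuelDist (half_pos hε)
    (fun k => (half_lt_self hε).trans_le (not_lt.1 (hψε k))) (h.comp hψ.tendsto_atTop)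

lemma eq_of_mapClusterPt_of_tendsto_samuelDist (hX : Bornology.IsBounded (Set.univ : Set X))
    {ι : Type*} {l : Filter ι} {v : ι → Samuel X} {a c : Samuel X}
    (hv : Tendsto (fun i => samuelDist X a (v i)) l (𝓝 0)) (hc : MapClusterPt c l v) : c = a := by
  refine eq_of_forall_apply_toUCB_eq fun f => ?_
  have hlim : Tendsto (fun i => v i (toUCB X f)) l (𝓝 (a (toUCB X f))) :=
    tendsto_iff_norm_sub_tendsto_zero.2 <| squeeze_zero (fun _ => norm_nonneg _)
      (fun i => (norm_sub_rev _ _).trans_le (norm_apply_sub_apply_le_samuelDist hX a (v i) f)) hv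
  exact eq_of_nhds_neBot <|
    (hc.continuousAt_comp (continuous_eval (toUCB X f)).continuousAt).neBot.mono
      (inf_le_inf_left _ hlim)

theorem exists_samuelDist_lt_subset (hX : Bornology.IsBounded (Set.univ : Set X))
    {a : Samuel X} {T : Set (Samuel X)} (hT : T ∈ 𝓝 a) :
    ∃ ε > 0, ∀ b, samuelDist X a b < ε → b ∈ T := by
  by_contra! h
  choose v hv hvT using fun m : ℕ => h (1 / ((m : ℝ) + 1)) Nat.one_div_pos_of_nat
  have hlim : Tendsto (fun m => samuelDist X a (v m)) atTop (𝓝 0) :=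
    squeeze_zero (fun _ => samuelDist_nonneg _ _) (fun m => (hv m).le)
      tendsto_one_div_add_atTop_nhds_zero_nat
  obtain ⟨c, hc⟩ := exists_clusterPt_of_compactSpace (map v atTop)
  rw [← mapClusterPt_def, eq_of_mapClusterPt_of_tendsto_samuelDist hX hlim hc] at hc
  obtain ⟨m, hm⟩ := (hc.frequently hT).exists
  exact hvT m hm

theorem isOpen_preimage_val_of_samuelDist {K : Set (Samuel X)} [SequentialSpace K]
    {S : Set (Samuel X)} (hS : ∀ a ∈ S, ∃ ε > 0, ∀ b ∈ K, samuelDist X a b < ε → b ∈ S) :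
    IsOpen ((↑) ⁻¹' S : Set K) := by
  rw [← isClosed_compl_iff, ← isSeqClosed_iff_isClosed]
  intro w p hw hwp hpS
  obtain ⟨ε, hε, hεS⟩ := hS p hpS
  obtain ⟨n, hn⟩ := ((tendsto_samuelDist_of_tendsto
    ((continuous_subtype_val.tendsto p).comp hwp)).eventually (gt_mem_nhds hε)).exists
  exact hw n (hεS _ (w n).2 (by rwa [samuelDist_comm]))

end Samuel

/-- **Metrizable subspaces of the Samuel compactification.**
Let `(X,d)` be a bounded metric space whose Samuel compactification `S(X)` carries the weak*
topology `τ` and the topometric distance `∂`. If `K ⊆ S(X)` is metrizable in the relative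
`τ`-topology, then the `∂`-topology and `τ` coincide on `K`: a subset of `K` is relatively
`τ`-open iff it is `∂`-open in `K`. In particular, if `K` is `τ`-closed, then `(K, ∂)` is
compact: every sequence in `K` has a subsequence `∂`-converging to a point of `K`. -/
theorem samuel_metrizable_subset (hbdd : Bornology.IsBounded (Set.univ : Set X))
    (K : Set (Samuel X)) (hK : TopologicalSpace.MetrizableSpace K) :
    (∀ S : Set (Samuel X), S ⊆ K →
        ((∃ T : Set (Samuel X), IsOpen T ∧ S = T ∩ K) ↔
          ∀ a ∈ S, ∃ ε > 0, ∀ b ∈ K, samuelDist X a b < ε → b ∈ S)) ∧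
      (IsClosed K →
        ∀ u : ℕ → Samuel X, (∀ n, u n ∈ K) →
          ∃ x ∈ K, ∃ φ : ℕ → ℕ, StrictMono φ ∧
            ∀ ε > 0, ∀ᶠ n in Filter.atTop, samuelDist X (u (φ n)) x < ε) := by
  refine ⟨fun S hSK => ⟨?_, fun hS => ?_⟩, fun hKc u hu => ?_⟩
  · rintro ⟨T, hT, rfl⟩ a ⟨haT, -⟩
    obtain ⟨ε, hε, hεT⟩ := Samuel.exists_samuelDist_lt_subset hbdd (hT.mem_nhds haT)
    exact ⟨ε, hε, fun b hb hab => ⟨hεT b hab, hb⟩⟩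
  · obtain ⟨T, hT, hTS⟩ := isOpen_induced_iff.1 (Samuel.isOpen_preimage_val_of_samuelDist hS)
    refine ⟨T, hT, ?_⟩
    rw [← Set.inter_eq_left.2 hSK]
    simpa only [Set.inter_comm K] using (Subtype.preimage_coe_eq_preimage_coe_iff.1 hTS).symm
  · have : CompactSpace K := isCompact_iff_compactSpace.1 hKc.isCompact
    obtain ⟨x, -, φ, hφ, hx⟩ :=
      isCompact_univ.tendsto_subseq (x := fun n => (⟨u n, hu n⟩ : K)) fun n => Set.mem_univ _
    exact ⟨x, x.2, φ, hφ, fun ε hε => (Samuel.tendsto_samuelDist_of_tendsto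
      ((continuous_subtype_val.tendsto x).comp hx)).eventually (gt_mem_nhds hε)⟩
end
end

section
/- Let X be a Polish space and let G be a Polish group acting on X continuously and topologically transitively (some orbit is dense). Then the following are equivalent: (1) there exists x ∈ X whose orbit G·x is comeagre in X; (2) for every open neighbourhood V of the identity of G and every nonempty open subset U of X, there exists a nonempty open subset U' ⊆ U such that for all nonempty open subsets W₁, W₂ ⊆ U', one has (V·W₁) ∩ W₂ ≠ ∅. -/
/-!
If the orbit of `x` is comeagre and `y ∈ U` lies on it, then for a small neighbourhood `W` of `1`
countably many translates of `W • y` cover the orbit, so `W • y` is not meagre and its closure has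
interior; on that interior (inside `U`) any two points of `W • y` differ by an element of
`W / W ⊆ V`.

Conversely, the condition forces `V • z` to be dense near `z` for generic `z`, i.e. the orbit maps
`g ↦ g • z` of generic points are almost open. For two such points `x`, `y` with `y` in the closure
of `G • x`, one builds alternately `gₙ` and `hₙ`, moving by less than `2⁻ⁿ`, with `gₙ • x` and
`hₙ • y` ever closer; in the limit `a • x = b • y`. Taking `x` generic with dense orbit, every
generic `y` lies in `G • x`.
-/

open Pointwise Set Filter Topology MulAction TopologicalSpace

def MixesOn {G X : Type*} [SMul G X] [TopologicalSpace X] (V : Set G) (U : Set X) : Prop :=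
  ∀ W₁ W₂ : Set X, IsOpen W₁ → IsOpen W₂ → W₁.Nonempty → W₂.Nonempty → W₁ ⊆ U → W₂ ⊆ U →
    (V • W₁ ∩ W₂).Nonempty

def IsAlmostOpenMap {α β : Type*} [TopologicalSpace α] [TopologicalSpace β] (f : α → β) : Prop :=
  ∀ a, ∀ K ∈ 𝓝 a, f a ∈ interior (closure (f '' K))

section ComeagreOrbit

variable {G X : Type*} [Group G] [MulAction G X] [TopologicalSpace X]

lemma IsMeagre.smul_set [ContinuousConstSMul G X] (g : G) {s : Set X} (hs : IsMeagre s) :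
    IsMeagre (g • s) := by
  simpa [preimage_smul] using
    hs.preimage_of_isOpenMap (continuous_const_smul g⁻¹) (isOpenMap_smul g⁻¹)

lemma isMeagre_orbit_of_isMeagre_image [TopologicalSpace G] [ContinuousMul G]
    [LindelofSpace G] [ContinuousConstSMul G X] {W : Set G} (hW : W ∈ 𝓝 1) {y : X}
    (h : IsMeagre ((· • y) '' W)) : IsMeagre (orbit G y) := by
  obtain ⟨s, hs, hcover⟩ := _root_.countable_cover_nhds fun g : G => smul_mem_nhds_self.2 hW
  refine (isMeagre_biUnion hs fun g _ => h.smul_set g).mono ?_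
  rintro _ ⟨k, rfl⟩
  obtain ⟨g, hg, w, hw, rfl⟩ := mem_iUnion₂.1 (hcover.superset (mem_univ k))
  exact mem_biUnion hg ⟨w • y, mem_image_of_mem _ hw, (mul_smul g w y).symm⟩

lemma mixesOn_of_subset_closure_image {V W : Set G} (hW : ∀ a ∈ W, ∀ b ∈ W, b / a ∈ V) {y : X}
    {U : Set X} (hU : U ⊆ closure ((· • y) '' W)) : MixesOn V U := by
  have hmeet : ∀ W' : Set X, IsOpen W' → W'.Nonempty → W' ⊆ U → ∃ a ∈ W, a • y ∈ W' := by
    rintro W' hW' ⟨p, hp⟩ hsub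
    obtain ⟨_, ⟨a, ha, rfl⟩, haW'⟩ :=
      (closure_inter_open_nonempty_iff hW').1 ⟨p, hU (hsub hp), hp⟩
    exact ⟨a, ha, haW'⟩
  intro W₁ W₂ hW₁ hW₂ hne₁ hne₂ h₁ h₂
  obtain ⟨a, ha, haW₁⟩ := hmeet W₁ hW₁ hne₁ h₁
  obtain ⟨b, hb, hbW₂⟩ := hmeet W₂ hW₂ hne₂ h₂
  refine ⟨b • y, ⟨b / a, hW a ha b hb, a • y, haW₁, ?_⟩, hbW₂⟩
  show (b / a) • a • y = b • y
  rw [smul_smul, div_mul_cancel]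

lemma exists_subset_mixesOn_of_orbit_mem_residual [TopologicalSpace G] [IsTopologicalGroup G]
    [LindelofSpace G] [ContinuousSMul G X] [BaireSpace X] {x : X}
    (hx : orbit G x ∈ residual X) {V : Set G} (hV : V ∈ 𝓝 1) {U : Set X} (hU : IsOpen U)
    (hUne : U.Nonempty) : ∃ U' ⊆ U, IsOpen U' ∧ U'.Nonempty ∧ MixesOn V U' := by
  obtain ⟨y, hyU, hyx⟩ := (dense_of_mem_residual hx).inter_open_nonempty U hU hUne
  have : Nonempty X := ⟨y⟩
  obtain ⟨W, hW, hWV⟩ := exists_nhds_split_inv hV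
  -- shrinking `W` so that `W • y ⊆ U` forces the interior below to meet `U`
  set W' := W ∩ (· • y) ⁻¹' U
  have hW' : W' ∈ 𝓝 (1 : G) :=
    inter_mem hW ((continuous_id.smul continuous_const).continuousAt.preimage_mem_nhds
      (by simpa using hU.mem_nhds hyU))
  set D := interior (closure ((· • y) '' W'))
  have hD : D.Nonempty := by
    rw [nonempty_iff_ne_empty]
    intro hD
    rw [← orbit_eq_iff.2 hyx] at hx
    exact not_isMeagre_of_mem_residual hx
      (isMeagre_orbit_of_isMeagre_image hW' (IsNowhereDense.isMeagre hD))
  refine ⟨D ∩ U, inter_subset_right, isOpen_interior.inter hU, ?_,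
    mixesOn_of_subset_closure_image (fun a ha b hb => hWV b hb.1 a ha.1)
      (inter_subset_left.trans interior_subset)⟩
  have hDU : D ⊆ closure U :=
    interior_subset.trans (closure_mono (image_subset_iff.2 inter_subset_right))
  obtain ⟨p, hp⟩ := hD
  exact inter_comm U D ▸ (closure_inter_open_nonempty_iff isOpen_interior).1 ⟨p, hDU hp, hp⟩

end ComeagreOrbit

section GenericPoints

variable {G X : Type*} [Group G] [MulAction G X] [TopologicalSpace X]

lemma eventually_residual_dense_orbit [SecondCountableTopology X] [ContinuousConstSMul G X]
    {x₀ : X} (hx₀ : Dense (orbit G x₀)) : ∀ᶠ x in residual X, Dense (orbit G x) := by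
  have hB := isBasis_countableBasis X
  have hmeet : ∀ b ∈ countableBasis X, ∀ᶠ x in residual X, b.Nonempty → ∃ g : G, g • x ∈ b := by
    refine fun b hb => eventually_imp_distrib_left.2 fun hne => ?_
    have hopen : IsOpen (⋃ g : G, (g • ·) ⁻¹' b) :=
      isOpen_iUnion fun g => (hB.isOpen hb).preimage (continuous_const_smul g)
    have hdense : Dense (⋃ g : G, (g • ·) ⁻¹' b) := by
      refine hx₀.mono ?_
      rintro _ ⟨k, rfl⟩
      obtain ⟨_, hmb, m, rfl⟩ := hx₀.inter_open_nonempty b (hB.isOpen hb) hne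
      refine mem_iUnion.2 ⟨m * k⁻¹, ?_⟩
      show (m * k⁻¹) • k • x₀ ∈ b
      rwa [smul_smul, inv_mul_cancel_right]
    filter_upwards [residual_of_dense_open hopen hdense] with x hx
    simpa using hx
  filter_upwards [(eventually_countable_ball (countable_countableBasis X)).2 hmeet] with x hx
  rw [hB.dense_iff]
  intro b hb hne
  obtain ⟨g, hg⟩ := hx b hb hne
  exact ⟨g • x, hg, mem_orbit x g⟩

-- `z ∈ coborder s` means `z ∈ closure s → z ∈ s`, which holds generically for open `s`.
lemma MixesOn.subset_closure_image {B : Set (Set X)} (hB : IsTopologicalBasis B) {V : Set G}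
    {U : Set X} (hU : IsOpen U) (hmix : MixesOn V U) {z : X} (hz : z ∈ U)
    (hcob : ∀ b ∈ B, z ∈ coborder (⋃ v ∈ V, (v • ·) ⁻¹' b)) : U ⊆ closure ((· • z) '' V) := by
  intro p hp
  rw [mem_closure_iff]
  intro o ho hpo
  obtain ⟨b, hb, hpb, hbsub⟩ := hB.exists_subset_of_mem_open (u := o ∩ U) ⟨hpo, hp⟩ (ho.inter hU)
  have hcl : z ∈ closure (⋃ v ∈ V, (v • ·) ⁻¹' b) := by
    rw [mem_closure_iff]
    intro o' ho' hzo'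
    obtain ⟨_, ⟨v, hv, w, ⟨hwo', -⟩, rfl⟩, hvw⟩ := hmix (o' ∩ U) b (ho'.inter hU) (hB.isOpen hb)
      ⟨z, hzo', hz⟩ ⟨p, hpb⟩ inter_subset_right (hbsub.trans inter_subset_right)
    exact ⟨w, hwo', mem_iUnion₂.2 ⟨v, hv, hvw⟩⟩
  have hmem : z ∈ ⋃ v ∈ V, (v • ·) ⁻¹' b := by
    by_contra h
    exact hcob b hb ⟨hcl, h⟩
  obtain ⟨v, hv, hvz⟩ := mem_iUnion₂.1 hmem
  exact ⟨v • z, (hbsub hvz).1, v, hv, rfl⟩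

lemma eventually_residual_mem_interior_closure_image [SecondCountableTopology X]
    [ContinuousConstSMul G X] {V : Set G}
    (hV : ∀ U : Set X, IsOpen U → U.Nonempty → ∃ U' ⊆ U, IsOpen U' ∧ U'.Nonempty ∧ MixesOn V U') :
    ∀ᶠ z in residual X, z ∈ interior (closure ((· • z) '' V)) := by
  have hB := isBasis_countableBasis X
  have hlocal : ∀ᶠ z in residual X, ∃ U, IsOpen U ∧ z ∈ U ∧ MixesOn V U := by
    refine residual_of_dense_open ?_ ?_
    · rw [isOpen_iff_forall_mem_open]
      rintro z ⟨U, hU, hzU, hmix⟩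
      exact ⟨U, fun w hw => ⟨U, hU, hw, hmix⟩, hU, hzU⟩
    · rw [dense_iff_inter_open]
      intro O hO hOne
      obtain ⟨U', hU'O, hU', ⟨p, hp⟩, hmix⟩ := hV O hO hOne
      exact ⟨p, hU'O hp, U', hU', hp, hmix⟩
  have hcob : ∀ᶠ z in residual X, ∀ b ∈ countableBasis X,
      z ∈ coborder (⋃ v ∈ V, (v • ·) ⁻¹' b) :=
    (eventually_countable_ball (countable_countableBasis X)).2 fun b hb =>
      coborder_mem_residual (isOpen_biUnion fun v _ =>
        (hB.isOpen hb).preimage (continuous_const_smul v)).isLocallyClosed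
  filter_upwards [hlocal, hcob] with z ⟨U, hU, hzU, hmix⟩ hz
  exact interior_maximal (hmix.subset_closure_image hB hU hzU hz) hU hzU

lemma isAlmostOpenMap_smul_of_nhds_one [TopologicalSpace G] [ContinuousMul G]
    [ContinuousConstSMul G X] {z : X}
    (h : ∀ V ∈ 𝓝 (1 : G), z ∈ interior (closure ((· • z) '' V))) :
    IsAlmostOpenMap (· • z : G → X) := by
  intro g K hK
  have hK' : (g * ·) ⁻¹' K ∈ 𝓝 (1 : G) :=
    (continuous_const_mul g).continuousAt.preimage_mem_nhds (by simpa using hK)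
  have hsub : g • ((· • z) '' ((g * ·) ⁻¹' K)) ⊆ (· • z) '' K := by
    rintro _ ⟨_, ⟨k, hk, rfl⟩, rfl⟩
    exact ⟨g * k, hk, mul_smul g k z⟩
  have := smul_mem_smul_set (a := g) (h _ hK')
  rw [← interior_smul, ← closure_smul] at this
  exact interior_mono (closure_mono hsub) this

lemma eventually_residual_isAlmostOpenMap_smul [TopologicalSpace G] [ContinuousMul G]
    [FirstCountableTopology G] [SecondCountableTopology X] [ContinuousConstSMul G X]
    (hmix : ∀ V : Set G, IsOpen V → (1 : G) ∈ V → ∀ U : Set X, IsOpen U → U.Nonempty →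
      ∃ U' ⊆ U, IsOpen U' ∧ U'.Nonempty ∧ MixesOn V U') :
    ∀ᶠ z in residual X, IsAlmostOpenMap (· • z : G → X) := by
  obtain ⟨V, hV, hbasis⟩ := (nhds_basis_opens (1 : G)).exists_antitone_subbasis
  filter_upwards [eventually_countable_forall.2 fun n =>
    eventually_residual_mem_interior_closure_image (hmix (V n) (hV n).2 (hV n).1)] with z hz
  refine isAlmostOpenMap_smul_of_nhds_one fun W hW => ?_
  obtain ⟨n, -, hn⟩ := hbasis.toHasBasis.mem_iff.1 hW
  exact interior_mono (closure_mono (image_mono hn)) (hz n)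

end GenericPoints

section Fusion

variable {G X : Type*} [Group G] [MulAction G X]

lemma IsAlmostOpenMap.exists_smul_dist_lt [PseudoMetricSpace G] [PseudoMetricSpace X] {x y : X}
    (hx : IsAlmostOpenMap (· • x : G → X)) (hy : IsAlmostOpenMap (· • y : G → X)) {g h : G}
    {ε δ : ℝ} (hε : 0 < ε) (hδ : 0 < δ)
    (hgh : g • x ∈ interior (closure ((· • y) '' Metric.ball h ε))) :
    ∃ g' h' : G, dist g' g < ε ∧ dist h' h < ε ∧ dist (g' • x) (h' • y) < ε ∧
      g' • x ∈ interior (closure ((· • y) '' Metric.ball h' δ)) := by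
  have hgx := hx g _ (Metric.ball_mem_nhds g hε)
  obtain ⟨_, hh'y, h', hh', rfl⟩ :=
    mem_closure_iff.1 (interior_subset hgh) _ isOpen_interior hgx
  obtain ⟨_, ⟨hg'x, hdist⟩, g', hg', rfl⟩ :=
    mem_closure_iff.1 (interior_subset hh'y) _ (isOpen_interior.inter Metric.isOpen_ball)
      ⟨hy h' _ (Metric.ball_mem_nhds h' hδ), Metric.mem_ball_self hε⟩
  exact ⟨g', h', hg', hh', hdist, hg'x⟩

lemma IsAlmostOpenMap.exists_seq_dist_lt [PseudoMetricSpace G] [PseudoMetricSpace X] {x y : X}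
    (hx : IsAlmostOpenMap (· • x : G → X)) (hy : IsAlmostOpenMap (· • y : G → X)) {g₀ h₀ : G}
    (hstart : g₀ • x ∈ interior (closure ((· • y) '' Metric.ball h₀ 1))) :
    ∃ u : ℕ → G × G, ∀ n, dist (u n).1 (u (n + 1)).1 < (1 / 2) ^ n ∧
      dist (u n).2 (u (n + 1)).2 < (1 / 2) ^ n ∧
      dist ((u (n + 1)).1 • x) ((u (n + 1)).2 • y) < (1 / 2) ^ n := by
  have hstep : ∀ (n : ℕ) (p : G × G),
      p.1 • x ∈ interior (closure ((· • y) '' Metric.ball p.2 ((1 / 2) ^ n))) →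
      ∃ q : G × G, q.1 • x ∈ interior (closure ((· • y) '' Metric.ball q.2 ((1 / 2) ^ (n + 1)))) ∧
        dist p.1 q.1 < (1 / 2) ^ n ∧ dist p.2 q.2 < (1 / 2) ^ n ∧
        dist (q.1 • x) (q.2 • y) < (1 / 2) ^ n := by
    intro n p hp
    obtain ⟨g', h', hg', hh', hdist, hgood⟩ :=
      hx.exists_smul_dist_lt hy (pow_pos one_half_pos _) (pow_pos one_half_pos _) hp
    exact ⟨(g', h'), hgood, dist_comm g' p.1 ▸ hg', dist_comm h' p.2 ▸ hh', hdist⟩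
  choose! next hnext using hstep
  let u : ℕ → G × G := fun n => Nat.rec (g₀, h₀) next n
  have hgood : ∀ n, (u n).1 • x ∈
      interior (closure ((· • y) '' Metric.ball (u n).2 ((1 / 2) ^ n))) := by
    intro n
    induction n with
    | zero => simpa [u] using hstart
    | succ n ih => exact (hnext n (u n) ih).1
  exact ⟨u, fun n => (hnext n (u n) (hgood n)).2⟩

theorem mem_orbit_of_isAlmostOpenMap [TopologicalSpace G] [IsCompletelyMetrizableSpace G]
    [TopologicalSpace X] [MetrizableSpace X] [ContinuousSMul G X] {x y : X}
    (hx : IsAlmostOpenMap (· • x : G → X)) (hy : IsAlmostOpenMap (· • y : G → X))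
    (hxy : y ∈ closure (orbit G x)) : y ∈ orbit G x := by
  let := upgradeIsCompletelyMetrizable G
  let := metrizableSpaceMetric X
  obtain ⟨_, hg₀, g₀, rfl⟩ := mem_closure_iff.1 hxy _ isOpen_interior
    (by simpa using hy 1 _ (Metric.ball_mem_nhds (1 : G) one_pos))
  obtain ⟨u, hu⟩ := hx.exists_seq_dist_lt hy hg₀
  obtain ⟨a, ha⟩ := cauchySeq_tendsto_of_complete <| cauchySeq_of_le_geometric
    (f := fun n => (u n).1) (1 / 2) 1 one_half_lt_one fun n => by rw [one_mul]; exact (hu n).1.le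
  obtain ⟨b, hb⟩ := cauchySeq_tendsto_of_complete <| cauchySeq_of_le_geometric
    (f := fun n => (u n).2) (1 / 2) 1 one_half_lt_one fun n => by rw [one_mul]; exact (hu n).2.1.le
  have hdist : Tendsto (fun n => dist ((u (n + 1)).1 • x) ((u (n + 1)).2 • y)) atTop (𝓝 0) :=
    squeeze_zero (fun _ => dist_nonneg) (fun n => (hu n).2.2.le)
      (tendsto_pow_atTop_nhds_zero_of_lt_one one_half_pos.le one_half_lt_one)
  have hab : a • x = b • y := by
    refine dist_eq_zero.1 (tendsto_nhds_unique ?_ hdist)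
    exact ((ha.smul_const x).dist (hb.smul_const y)).comp (tendsto_add_atTop_nat 1)
  exact mem_orbit_iff.2 ⟨b⁻¹ * a, by rw [mul_smul, hab, inv_smul_smul]⟩

end Fusion

/-- **Rosendal's criterion for a comeagre orbit.**
Let `X` be a Polish space and `G` a Polish group acting on `X` continuously and topologically
transitively (some orbit is dense). Then there is a comeagre `G`-orbit if and only if
for every open neighbourhood `V` of `1 ∈ G` and every nonempty open `U ⊆ X` there is a
nonempty open `U' ⊆ U` such that for all nonempty open `W₁, W₂ ⊆ U'` one has
`(V • W₁) ∩ W₂ ≠ ∅`. -/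
theorem comeagre_orbit_iff {G X : Type*} [Group G] [TopologicalSpace G] [IsTopologicalGroup G]
    [PolishSpace G] [TopologicalSpace X] [PolishSpace X]
    [MulAction G X] [ContinuousSMul G X]
    (htrans : ∃ x : X, Dense (MulAction.orbit G x)) :
    (∃ x : X, MulAction.orbit G x ∈ residual X) ↔
      ∀ V : Set G, IsOpen V → (1 : G) ∈ V →
        ∀ U : Set X, IsOpen U → U.Nonempty →
          ∃ U' : Set X, U' ⊆ U ∧ IsOpen U' ∧ U'.Nonempty ∧
            ∀ W₁ W₂ : Set X, IsOpen W₁ → IsOpen W₂ → W₁.Nonempty → W₂.Nonempty →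
              W₁ ⊆ U' → W₂ ⊆ U' → (V • W₁ ∩ W₂).Nonempty := by
  constructor
  · rintro ⟨x, hx⟩ V hV h1 U hU hUne
    exact exists_subset_mixesOn_of_orbit_mem_residual hx (hV.mem_nhds h1) hU hUne
  · intro hmix
    obtain ⟨x₀, hx₀⟩ := htrans
    have : Nonempty X := ⟨x₀⟩
    have hgeneric := eventually_residual_isAlmostOpenMap_smul hmix
    obtain ⟨x, hxA, hxD⟩ :=
      (dense_of_mem_residual (hgeneric.and (eventually_residual_dense_orbit hx₀))).nonempty
    refine ⟨x, ?_⟩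
    filter_upwards [hgeneric] with y hy
    exact mem_orbit_of_isAlmostOpenMap hxA hy (hxD.closure_eq ▸ mem_univ y)
end
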